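/- Suppose L₀ is a sequential contraction of L and let α : ℝ. Define the modified Killing quadratic form on a Lie algebra g by Q_α(x) = trace(ad x ∘ ad x) + α · (trace(ad x))². Then the positive and negative ranks of Q_α do not increase under contraction, in the precise form: (a) for every real subspace W of L₀ such that Q_α(x) > 0 for all nonzero x ∈ W, there exists a subspace W' of L with finrank ℝ W' = finrank ℝ W and Q_α(x) > 0 for all nonzero x ∈ W'; and (b) the same statement with '> 0' replaced by '< 0' throughout. (The case α = 0 is the statement for the Killing form itself.) -/

import Mathlib

/-!
Transporting the modified Killing form of `L` along `T p` gives bilinear forms on `L₀` built from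
the transported adjoint maps `x ↦ T p ⁅(T p).symm x, (T p).symm ·⁆`; these converge pointwise to
`ad`, hence entrywise as matrices, so by continuity of traces of products the transported forms
converge to the modified Killing form `B₀` of `L₀`. Positive definiteness of a Gram matrix is an
open condition (positivity on the compact unit sphere), so if `B₀` is positive definite on `W`, so
is the transported form for some `p`, i.e. `Q_α` is positive definite on `(T p)⁻¹ W ⊆ L`. The
negative case is the positive one for `-Q_α`.
-/

open Filter Module

/-- `L₀` is a sequential contraction of the real Lie algebra `L`: there is a sequence of
real-linear equivalences `T p : L ≃ₗ[ℝ] L₀` such that the transported brackets converge to the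
bracket of `L₀`. -/
def IsSequentialContraction (L L₀ : Type*) [LieRing L] [LieAlgebra ℝ L]
    [LieRing L₀] [LieAlgebra ℝ L₀] [TopologicalSpace L₀] : Prop :=
  ∃ T : ℕ → (L ≃ₗ[ℝ] L₀), ∀ x y : L₀,
    Tendsto (fun p => T p ⁅(T p).symm x, (T p).symm y⁆) atTop (nhds ⁅x, y⁆)

/-- The modified Killing quadratic form `Q_α(x) = tr(ad x ∘ ad x) + α (tr ad x)²`. -/
noncomputable def modKilling (α : ℝ) {L : Type*} [LieRing L] [LieAlgebra ℝ L] (x : L) : ℝ :=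
  LinearMap.trace ℝ L (LieAlgebra.ad ℝ L x * LieAlgebra.ad ℝ L x) +
    α * (LinearMap.trace ℝ L (LieAlgebra.ad ℝ L x)) ^ 2

open Matrix

theorem Matrix.isOpen_setOf_forall_pos_dotProduct_mulVec (n : Type*) [Fintype n] :
    IsOpen {G : Matrix n n ℝ | ∀ v ≠ 0, 0 < v ⬝ᵥ G *ᵥ v} := by
  set S := Metric.sphere (0 : n → ℝ) 1
  have hS : ∀ G : Matrix n n ℝ, (∀ v ≠ 0, 0 < v ⬝ᵥ G *ᵥ v) ↔ ∀ v ∈ S, 0 < v ⬝ᵥ G *ᵥ v := by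
    refine fun G => ⟨fun h v hv => h v (ne_zero_of_mem_unit_sphere ⟨v, hv⟩), fun h v hv => ?_⟩
    have hr : 0 < ‖v‖ := norm_pos_iff.2 hv
    have hu : ‖v‖⁻¹ • v ∈ S := by simp [S, norm_smul, hr.ne']
    have hv' : v = ‖v‖ • ‖v‖⁻¹ • v := by rw [smul_smul, mul_inv_cancel₀ hr.ne', one_smul]
    rw [hv', Matrix.mulVec_smul, smul_dotProduct, dotProduct_smul, smul_smul]
    exact smul_pos (mul_pos hr hr) (h _ hu)
  simp_rw [hS, isOpen_iff_eventually]
  refine fun G₀ hG₀ => (isCompact_sphere 0 1).eventually_forall_of_forall_eventually fun v hv => ?_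
  have hc : Continuous fun z : Matrix n n ℝ × (n → ℝ) => z.2 ⬝ᵥ z.1 *ᵥ z.2 :=
    continuous_snd.dotProduct (continuous_fst.matrix_mulVec continuous_snd)
  exact (hc.tendsto (G₀, v)).eventually_const_lt (hG₀ v hv)

theorem LinearMap.BilinForm.eventually_pos_of_tendsto {ι V : Type*} [AddCommGroup V]
    [Module ℝ V] [FiniteDimensional ℝ V] {l : Filter ι} {B : ι → LinearMap.BilinForm ℝ V}
    {B₀ : LinearMap.BilinForm ℝ V} (hB : ∀ x y, Tendsto (fun i => B i x y) l (nhds (B₀ x y)))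
    (hB₀ : ∀ x ≠ 0, 0 < B₀ x x) :
    ∀ᶠ i in l, ∀ x ≠ 0, 0 < B i x x := by
  let b := Module.finBasis ℝ V
  have hpos : ∀ B : LinearMap.BilinForm ℝ V, (∀ x ≠ 0, 0 < B x x) ↔
      toMatrix b B ∈ {G : Matrix _ _ ℝ | ∀ v ≠ 0, 0 < v ⬝ᵥ G *ᵥ v} := by
    intro B
    simp only [Set.mem_ofPred_eq, dotProduct_toMatrix_mulVec]
    refine ⟨fun h v hv => h _ (b.equivFun.symm.map_ne_zero_iff.2 hv), fun h x hx => ?_⟩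
    simpa using h (b.equivFun x) (by simpa using hx)
  have hlim : Tendsto (fun i => toMatrix b (B i)) l (nhds (toMatrix b B₀)) :=
    tendsto_pi_nhds.2 fun j => tendsto_pi_nhds.2 fun k => by simpa using hB (b j) (b k)
  filter_upwards [hlim.eventually
    ((Matrix.isOpen_setOf_forall_pos_dotProduct_mulVec _).mem_nhds ((hpos B₀).1 hB₀))]
    with i hi using (hpos (B i)).2 hi

section Trace

variable {𝕜 V ι : Type*} [NontriviallyNormedField 𝕜] [CompleteSpace 𝕜] [AddCommGroup V]
  [Module 𝕜 V] [TopologicalSpace V] [IsTopologicalAddGroup V] [ContinuousSMul 𝕜 V] [T2Space V]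
  [FiniteDimensional 𝕜 V] {l : Filter ι} {f g : ι → Module.End 𝕜 V} {f₀ g₀ : Module.End 𝕜 V}

theorem LinearMap.tendsto_toMatrix_of_tendsto_apply {n : Type*} [Fintype n] [DecidableEq n]
    (b : Basis n 𝕜 V) (hf : ∀ z, Tendsto (fun i => f i z) l (nhds (f₀ z))) :
    Tendsto (fun i => toMatrix b b (f i)) l (nhds (toMatrix b b f₀)) :=
  tendsto_pi_nhds.2 fun j => tendsto_pi_nhds.2 fun k => by
    simpa only [toMatrix_apply, Basis.coord_apply, Function.comp_def] using
      ((b.coord j).continuous_of_finiteDimensional.tendsto _).comp (hf (b k))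

theorem LinearMap.tendsto_trace_mul_of_tendsto_apply
    (hf : ∀ z, Tendsto (fun i => f i z) l (nhds (f₀ z)))
    (hg : ∀ z, Tendsto (fun i => g i z) l (nhds (g₀ z))) :
    Tendsto (fun i => trace 𝕜 V (f i * g i)) l (nhds (trace 𝕜 V (f₀ * g₀))) := by
  let b := Module.finBasis 𝕜 V
  simp only [trace_eq_matrix_trace 𝕜 b, toMatrix_mul]
  exact (continuous_id.matrix_trace.tendsto _).comp
    ((tendsto_toMatrix_of_tendsto_apply b hf).mul (tendsto_toMatrix_of_tendsto_apply b hg))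

theorem LinearMap.tendsto_trace_of_tendsto_apply
    (hf : ∀ z, Tendsto (fun i => f i z) l (nhds (f₀ z))) :
    Tendsto (fun i => trace 𝕜 V (f i)) l (nhds (trace 𝕜 V f₀)) := by
  simpa using tendsto_trace_mul_of_tendsto_apply hf (g := fun _ => 1) (g₀ := 1)
    fun _ => tendsto_const_nhds

end Trace

section ModKillingForm

variable {R L L₀ : Type*} [CommRing R] [LieRing L] [LieAlgebra R L]

variable (R L) in
noncomputable def modKillingForm (α : R) : LinearMap.BilinForm R L :=
  killingForm R L + α • LinearMap.BilinForm.linMulLin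
    (LinearMap.trace R L ∘ₗ (LieAlgebra.ad R L : L →ₗ[R] Module.End R L))
    (LinearMap.trace R L ∘ₗ (LieAlgebra.ad R L : L →ₗ[R] Module.End R L))

theorem modKillingForm_apply (α : R) (x y : L) :
    modKillingForm R L α x y =
      LinearMap.trace R L (LieAlgebra.ad R L x * LieAlgebra.ad R L y) +
        α * (LinearMap.trace R L (LieAlgebra.ad R L x) *
          LinearMap.trace R L (LieAlgebra.ad R L y)) := by
  simp [modKillingForm, killingForm_apply_apply, Module.End.mul_eq_comp]

theorem modKillingForm_symm_apply_symm [AddCommGroup L₀] [Module R L₀] (e : L ≃ₗ[R] L₀) (α : R)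
    (x y : L₀) :
    modKillingForm R L α (e.symm x) (e.symm y) =
      LinearMap.trace R L₀
          (e.conj (LieAlgebra.ad R L (e.symm x)) * e.conj (LieAlgebra.ad R L (e.symm y))) +
        α * (LinearMap.trace R L₀ (e.conj (LieAlgebra.ad R L (e.symm x))) *
          LinearMap.trace R L₀ (e.conj (LieAlgebra.ad R L (e.symm y)))) := by
  simp only [modKillingForm_apply, Module.End.mul_eq_comp, ← LinearEquiv.conj_comp,
    LinearMap.trace_conj']

end ModKillingForm

theorem modKillingForm_apply_self {L : Type*} [LieRing L] [LieAlgebra ℝ L] (α : ℝ) (x : L) :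
    modKillingForm ℝ L α x x = modKilling α x := by
  rw [modKillingForm_apply, modKilling, sq]

theorem tendsto_modKillingForm_symm_apply_symm {ι L L₀ : Type*} [LieRing L] [LieAlgebra ℝ L]
    [LieRing L₀] [LieAlgebra ℝ L₀] [FiniteDimensional ℝ L₀] [TopologicalSpace L₀]
    [IsTopologicalAddGroup L₀] [ContinuousSMul ℝ L₀] [T2Space L₀] {l : Filter ι}
    (T : ι → L ≃ₗ[ℝ] L₀)
    (hT : ∀ x y : L₀, Tendsto (fun i => T i ⁅(T i).symm x, (T i).symm y⁆) l (nhds ⁅x, y⁆))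
    (α : ℝ) (x y : L₀) :
    Tendsto (fun i => modKillingForm ℝ L α ((T i).symm x) ((T i).symm y)) l
      (nhds (modKillingForm ℝ L₀ α x y)) := by
  have had : ∀ x z, Tendsto (fun i => (T i).conj (LieAlgebra.ad ℝ L ((T i).symm x)) z) l
      (nhds (LieAlgebra.ad ℝ L₀ x z)) := by
    simpa [LinearEquiv.conj_apply] using hT
  simp only [modKillingForm_symm_apply_symm]
  rw [modKillingForm_apply]
  exact (LinearMap.tendsto_trace_mul_of_tendsto_apply (had x) (had y)).add
    (tendsto_const_nhds.mul ((LinearMap.tendsto_trace_of_tendsto_apply (had x)).mul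
      (LinearMap.tendsto_trace_of_tendsto_apply (had y))))

theorem exists_finrank_eq_forall_pos_of_tendsto {ι V V₀ : Type*} [AddCommGroup V] [Module ℝ V]
    [AddCommGroup V₀] [Module ℝ V₀] [FiniteDimensional ℝ V₀] {l : Filter ι} [l.NeBot]
    (e : ι → V ≃ₗ[ℝ] V₀) {B : LinearMap.BilinForm ℝ V} {B₀ : LinearMap.BilinForm ℝ V₀}
    (hB : ∀ x y, Tendsto (fun i => B ((e i).symm x) ((e i).symm y)) l (nhds (B₀ x y)))
    {W : Submodule ℝ V₀} (hW : ∀ x ∈ W, x ≠ 0 → 0 < B₀ x x) :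
    ∃ W' : Submodule ℝ V, finrank ℝ W' = finrank ℝ W ∧ ∀ x ∈ W', x ≠ 0 → 0 < B x x := by
  have hW' : ∀ x : W, x ≠ 0 → 0 < B₀.compl₁₂ W.subtype W.subtype x x := fun x hx =>
    hW x x.2 (by simpa using hx)
  have hlim : ∀ x y : W, Tendsto (fun i => B.compl₁₂ ((e i).symm ∘ₗ W.subtype)
      ((e i).symm ∘ₗ W.subtype) x y) l (nhds (B₀.compl₁₂ W.subtype W.subtype x y)) :=
    fun x y => hB x y
  obtain ⟨i, hi⟩ := (LinearMap.BilinForm.eventually_pos_of_tendsto hlim hW').exists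
  refine ⟨W.map ((e i).symm : V₀ →ₗ[ℝ] V), LinearEquiv.finrank_map_eq (e i).symm W, ?_⟩
  rintro _ ⟨y, hy, rfl⟩ hy0
  exact hi ⟨y, hy⟩ (by simpa using hy0)

theorem modKilling_inertia_of_contraction_general {L L₀ : Type*} [LieRing L] [LieAlgebra ℝ L] [LieRing L₀] [LieAlgebra ℝ L₀]
    [Module.Finite ℝ L₀]
    [TopologicalSpace L₀] [IsTopologicalAddGroup L₀] [ContinuousSMul ℝ L₀] [T2Space L₀]
    (h : IsSequentialContraction L L₀) (α : ℝ) :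
    (∀ W : Submodule ℝ L₀, (∀ x ∈ W, x ≠ 0 → 0 < modKilling α x) →
      ∃ W' : Submodule ℝ L, finrank ℝ W' = finrank ℝ W ∧
        ∀ x ∈ W', x ≠ 0 → 0 < modKilling α x) ∧
    (∀ W : Submodule ℝ L₀, (∀ x ∈ W, x ≠ 0 → modKilling α x < 0) →
      ∃ W' : Submodule ℝ L, finrank ℝ W' = finrank ℝ W ∧
        ∀ x ∈ W', x ≠ 0 → modKilling α x < 0) := by
  obtain ⟨T, hT⟩ := h
  have hlim := tendsto_modKillingForm_symm_apply_symm T hT α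
  simp only [← modKillingForm_apply_self]
  refine ⟨fun W hW => exists_finrank_eq_forall_pos_of_tendsto T hlim hW, fun W hW => ?_⟩
  simpa using exists_finrank_eq_forall_pos_of_tendsto T (B := -modKillingForm ℝ L α)
    (B₀ := -modKillingForm ℝ L₀ α) (fun x y => (hlim x y).neg) (W := W) (by simpa using hW)

/-- Under a sequential contraction, the positive and negative ranks of the modified Killing
form do not increase. -/
theorem modKilling_inertia_of_contraction {L L₀ : Type*} [LieRing L] [LieAlgebra ℝ L] [LieRing L₀] [LieAlgebra ℝ L₀]
    [Module.Finite ℝ L] [Module.Finite ℝ L₀]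
    [TopologicalSpace L₀] [IsTopologicalAddGroup L₀] [ContinuousSMul ℝ L₀] [T2Space L₀]
    (h : IsSequentialContraction L L₀) (α : ℝ) :
    (∀ W : Submodule ℝ L₀, (∀ x ∈ W, x ≠ 0 → 0 < modKilling α x) →
      ∃ W' : Submodule ℝ L, finrank ℝ W' = finrank ℝ W ∧
        ∀ x ∈ W', x ≠ 0 → 0 < modKilling α x) ∧
    (∀ W : Submodule ℝ L₀, (∀ x ∈ W, x ≠ 0 → modKilling α x < 0) →
      ∃ W' : Submodule ℝ L, finrank ℝ W' = finrank ℝ W ∧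
        ∀ x ∈ W', x ≠ 0 → modKilling α x < 0) :=
  modKilling_inertia_of_contraction_general h α
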